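/- Let G be a group and N a normal subgroup of G with N abelian. Let k ∈ ℕ and f_1,…,f_k, g_1,…,g_k, a_1,…,a_k, b_1,…,b_k ∈ G such that f_i ≡ a_i mod N and g_i ≡ b_i mod N for all i. Then the element [f_1,g_1]⋯[f_k,g_k]·([a_1,b_1]⋯[a_k,b_k])⁻¹ lies in [G,N] and its mixed commutator length cl_{G,N} is at most 2k. -/

import Mathlib

/-!
Write `f = u * a` and `g = v * b` with `u v ∈ N`. Expanding, `⁅u * a, v * b⁆ * ⁅a, b⁆⁻¹` is a
product of four conjugates of `u`, `v`, `u⁻¹`, `v⁻¹`, all in `N`; since `N` is abelian they can be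
regrouped into two mixed commutators `⁅g, n⁆`, `n ∈ N`. With `c = ⁅a₀, b₀⁆`, the element for `k + 1`
pairs is `⁅f₀, g₀⁆ * c⁻¹` times the `c`-conjugate of the element for the remaining `k` pairs, and
conjugates of mixed commutators are mixed commutators, so induction on `k` gives `2 * k` of them.
-/

open scoped commutatorElement

/-- The mixed commutator length `cl_{G,N}` (∞ if not a product of mixed commutators). -/
noncomputable def clGN {G : Type*} [Group G] (N : Subgroup G) (x : G) : ℕ∞ :=
  sInf {n : ℕ∞ | ∃ k : ℕ, n = k ∧ ∃ g v : Fin k → G, (∀ i, v i ∈ N) ∧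
    x = (List.ofFn fun i => ⁅g i, v i⁆).prod}

/-- The rank of a subgroup: minimal size of a generating set. -/
noncomputable def rk {G : Type*} [Group G] (H : Subgroup G) : ℕ∞ :=
  sInf {n : ℕ∞ | ∃ S : Finset G, Subgroup.closure (S : Set G) = H ∧ n = S.card}

/-- The intermediate rank `intrk^Γ(Λ) = inf {rk Θ | Λ ≤ Θ ≤ Γ}`. -/
noncomputable def intrk {G : Type*} [Group G] (Λ : Subgroup G) : ℕ∞ :=
  sInf {n : ℕ∞ | ∃ Θ : Subgroup G, Λ ≤ Θ ∧ n = rk Θ}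

/-- The general rank in the sense of Malcev. -/
noncomputable def genrk (G : Type*) [Group G] : ℕ∞ :=
  sSup {n : ℕ∞ | ∃ Λ : Subgroup G, Λ.FG ∧ n = intrk Λ}

/-- The special rank in the sense of Malcev. -/
noncomputable def sperk (G : Type*) [Group G] : ℕ∞ :=
  sSup {n : ℕ∞ | ∃ Λ : Subgroup G, Λ.FG ∧ n = rk Λ}

open Pointwise

section MixedCommutators

variable {G : Type*} [Group G] (N : Subgroup G)

def mixedCommutatorSet : Set G := {x | ∃ g : G, ∃ v ∈ N, ⁅g, v⁆ = x}

theorem mem_commutator_of_mem_mixedCommutatorSet_pow {n : ℕ} {x : G}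
    (hx : x ∈ mixedCommutatorSet N ^ n) : x ∈ ⁅(⊤ : Subgroup G), N⁆ :=
  Subgroup.pow_subset (s := mixedCommutatorSet N) (by
    rintro _ ⟨g, v, hv, rfl⟩
    exact Subgroup.commutator_mem_commutator (Subgroup.mem_top g) hv) hx

theorem clGN_le_of_mem_mixedCommutatorSet_pow {n : ℕ} {x : G}
    (hx : x ∈ mixedCommutatorSet N ^ n) : clGN N x ≤ n := by
  obtain ⟨c, rfl⟩ := Set.mem_pow.mp hx
  choose g v hv hc using fun i => (c i).2
  refine sInf_le ⟨n, rfl, g, v, hv, ?_⟩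
  simp only [hc]

variable [N.Normal]

theorem conj_mem_mixedCommutatorSet_pow (h : G) {n : ℕ} {x : G}
    (hx : x ∈ mixedCommutatorSet N ^ n) : h * x * h⁻¹ ∈ mixedCommutatorSet N ^ n := by
  have hconj : MulAut.conj h '' mixedCommutatorSet N ⊆ mixedCommutatorSet N := by
    rintro _ ⟨_, ⟨g, v, hv, rfl⟩, rfl⟩
    exact ⟨h * g * h⁻¹, h * v * h⁻¹, ‹N.Normal›.conj_mem v hv h, by
      simp only [MulAut.conj_apply]; group⟩
  exact Set.pow_subset_pow_left hconj (by rw [← Set.image_pow]; exact Set.mem_image_of_mem _ hx)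

theorem commutatorElement_mul_mul_inv_commutatorElement
    (hN : ∀ x y : G, x ∈ N → y ∈ N → x * y = y * x) {u v : G} (hu : u ∈ N) (hv : v ∈ N)
    (a b : G) :
    ⁅u * a, v * b⁆ * ⁅a, b⁆⁻¹ =
      ⁅a * ⁅a, b⁆⁻¹, ⁅a, b⁆ * v * ⁅a, b⁆⁻¹⁆ *
        ⁅(a * b * a⁻¹)⁻¹, a * b * a⁻¹ * u * (a * b * a⁻¹)⁻¹⁆ := by
  set c := ⁅a, b⁆ with hc
  set h := a * b * a⁻¹ with hh
  have expand_lhs : ⁅u * a, v * b⁆ * c⁻¹ =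
      u * (a * v * a⁻¹) * (h * u⁻¹ * h⁻¹) * (c * v⁻¹ * c⁻¹) := by
    simp only [hc, hh]; group
  have expand_rhs : ⁅a * c⁻¹, c * v * c⁻¹⁆ * ⁅h⁻¹, h * u * h⁻¹⁆ =
      (a * v * a⁻¹) * (c * v⁻¹ * c⁻¹) * (u * (h * u⁻¹ * h⁻¹)) := by
    group
  rw [expand_lhs, expand_rhs]
  have h₂ := ‹N.Normal›.conj_mem v hv a
  have h₃ := ‹N.Normal›.conj_mem u⁻¹ (inv_mem hu) h
  have h₄ := ‹N.Normal›.conj_mem v⁻¹ (inv_mem hv) c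
  generalize a * v * a⁻¹ = n₂, h * u⁻¹ * h⁻¹ = n₃, c * v⁻¹ * c⁻¹ = n₄ at h₂ h₃ h₄ ⊢
  calc u * n₂ * n₃ * n₄ = n₂ * (u * n₃ * n₄) := by rw [hN u n₂ hu h₂]; simp only [mul_assoc]
    _ = n₂ * (n₄ * (u * n₃)) := by rw [hN _ n₄ (mul_mem hu h₃) h₄]
    _ = n₂ * n₄ * (u * n₃) := (mul_assoc _ _ _).symm

theorem commutatorElement_mul_inv_mem_mixedCommutatorSet_sq
    (hN : ∀ x y : G, x ∈ N → y ∈ N → x * y = y * x) {f g a b : G}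
    (hf : f * a⁻¹ ∈ N) (hg : g * b⁻¹ ∈ N) :
    ⁅f, g⁆ * ⁅a, b⁆⁻¹ ∈ mixedCommutatorSet N ^ 2 := by
  have key := commutatorElement_mul_mul_inv_commutatorElement N hN hf hg a b
  simp only [inv_mul_cancel_right] at key
  rw [key, pow_two]
  exact Set.mul_mem_mul ⟨_, _, ‹N.Normal›.conj_mem _ hg _, rfl⟩
    ⟨_, _, ‹N.Normal›.conj_mem _ hf _, rfl⟩

theorem prod_commutatorElement_mul_inv_mem_mixedCommutatorSet_pow
    (hN : ∀ x y : G, x ∈ N → y ∈ N → x * y = y * x) :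
    ∀ {k : ℕ} {f g a b : Fin k → G}, (∀ i, f i * (a i)⁻¹ ∈ N) → (∀ i, g i * (b i)⁻¹ ∈ N) →
      (List.ofFn fun i => ⁅f i, g i⁆).prod * ((List.ofFn fun i => ⁅a i, b i⁆).prod)⁻¹ ∈
        mixedCommutatorSet N ^ (2 * k)
  | 0, _, _, _, _, _, _ => by simp
  | k + 1, f, g, a, b, hf, hg => by
    have ih := prod_commutatorElement_mul_inv_mem_mixedCommutatorSet_pow hN
      (fun i => hf i.succ) (fun i => hg i.succ)
    simp only [List.ofFn_succ, List.prod_cons]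
    rw [mul_add, mul_one, add_comm, pow_add]
    convert Set.mul_mem_mul
      (commutatorElement_mul_inv_mem_mixedCommutatorSet_sq N hN (hf 0) (hg 0))
      (conj_mem_mixedCommutatorSet_pow N ⁅a 0, b 0⁆ ih) using 1
    group

end MixedCommutators

/-- key lemma on replacing commutators modulo an abelian normal subgroup. -/
theorem clGN_prod_commutators_le {G : Type*} [Group G] (N : Subgroup G) [N.Normal]
    (habel : ∀ a b : G, a ∈ N → b ∈ N → a * b = b * a)
    (k : ℕ) (f g a b : Fin k → G)
    (hf : ∀ i, f i * (a i)⁻¹ ∈ N) (hg : ∀ i, g i * (b i)⁻¹ ∈ N) :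
    (List.ofFn fun i => ⁅f i, g i⁆).prod * ((List.ofFn fun i => ⁅a i, b i⁆).prod)⁻¹ ∈
      ⁅(⊤ : Subgroup G), N⁆ ∧
    clGN N ((List.ofFn fun i => ⁅f i, g i⁆).prod *
      ((List.ofFn fun i => ⁅a i, b i⁆).prod)⁻¹) ≤ 2 * k := by
  have hx := prod_commutatorElement_mul_inv_mem_mixedCommutatorSet_pow N habel hf hg
  refine ⟨mem_commutator_of_mem_mixedCommutatorSet_pow N hx, ?_⟩
  exact_mod_cast clGN_le_of_mem_mixedCommutatorSet_pow N hx
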